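/- Positivity of the multiplier kernel does not imply that the multiplier is well defined: in the Hilbert space H = ℓ²(ℕ) with standard orthonormal basis (e_j)_{j ≥ 0}, let P_j denote the orthogonal projection onto the span of e_j. Define bounded operators on H indexed by ℤ by H_ℓ := ℓ² P_ℓ − (ℓ−1)² P_{ℓ−1} for ℓ ≥ 1 and H_ℓ := 0 for ℓ ≤ 0, and set S_ℓ := I_H for all ℓ ∈ ℤ. Then: (i) for every n ∈ ℤ and every L ≥ 1, Σ_{|ℓ| ≤ L} S_{n−ℓ} H_ℓ = L² P_L, and the sequence (L² P_L)_{L ≥ 1} does not converge in the weak operator topology; (ii) nevertheless, for all n, m ∈ ℤ, for each fixed ℓ the WOT sum over ℓ' of S_{n−ℓ} H_ℓ H_{ℓ'}^* S_{m−ℓ'}^* exists, the resulting WOT sum over ℓ exists and equals 0, and the same holds with the order of summation reversed. -/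

import Mathlib

open ContinuousLinearMap Filter

noncomputable section

/-- The Hilbert space `ℓ²(ℕ)`. -/
abbrev ellTwo : Type := lp (fun _ : ℕ => ℂ) 2

/-- The standard orthonormal basis vectors of `ℓ²(ℕ)`. -/
noncomputable def stdBasis (j : ℕ) : ellTwo := lp.single 2 j (1 : ℂ)

/-- The finite "ball" `{ℓ ∈ ℤ : |ℓ| ≤ L}`. -/
def intBall (L : ℕ) : Finset ℤ := Finset.Icc (-(L : ℤ)) (L : ℤ)

/-- Convergence of a sequence of bounded operators in the weak operator topology. -/
def WOTTendsto {X Y : Type*} [NormedAddCommGroup X] [InnerProductSpace ℂ X]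
    [NormedAddCommGroup Y] [InnerProductSpace ℂ Y]
    (T : ℕ → X →L[ℂ] Y) (T0 : X →L[ℂ] Y) : Prop :=
  ∀ x y, Tendsto (fun L => (inner ℂ (T L x) y : ℂ)) atTop (nhds (inner ℂ (T0 x) y : ℂ))

/-- The coefficients `H_ℓ = ℓ² P_ℓ - (ℓ-1)² P_{ℓ-1}` for `ℓ ≥ 1` and `H_ℓ = 0` for
`ℓ ≤ 0`. -/
noncomputable def Hfam (P : ℕ → ellTwo →L[ℂ] ellTwo) (ℓ : ℤ) : ellTwo →L[ℂ] ellTwo :=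
  if 1 ≤ ℓ then ((ℓ : ℂ) ^ 2 • P ℓ.toNat - ((ℓ - 1 : ℤ) : ℂ) ^ 2 • P (ℓ - 1).toNat) else 0

/-- The coefficients `S_ℓ = I` for all `ℓ ∈ ℤ`. -/
noncomputable def Sfam (_ : ℤ) : ellTwo →L[ℂ] ellTwo := 1

/-!
The partial sums `∑_{|ℓ| ≤ L} H_ℓ` telescope to `L² P_L`. Tested against the vector with
entries `1/j` at even `j` and `0` at odd `j`, these give `1` at even and `0` at odd `L`, so
they have no WOT limit. On the other hand `H_ℓ P_j = 0` for `j > ℓ`, so the partial sums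
`H_ℓ (L'² P_{L'})*` and `L² P_L H_{ℓ'}*` of the kernel vanish as soon as `L' > ℓ`
(resp. `L > ℓ'`): every iterated WOT sum is eventually zero.
-/

def IsStdBasisProjection (P : ℕ → ellTwo →L[ℂ] ellTwo) : Prop :=
  ∀ (j : ℕ) (x : ellTwo), P j x = (inner ℂ (stdBasis j) x : ℂ) • stdBasis j

lemma inner_stdBasis_left (j : ℕ) (x : ellTwo) : (inner ℂ (stdBasis j) x : ℂ) = x j := by
  simp [stdBasis, lp.inner_single_left, RCLike.inner_apply]

lemma inner_stdBasis_stdBasis (a b : ℕ) :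
    (inner ℂ (stdBasis a) (stdBasis b) : ℂ) = if a = b then 1 else 0 := by
  rw [inner_stdBasis_left, stdBasis, lp.single_apply]
  split_ifs <;> simp_all

namespace IsStdBasisProjection

variable {P : ℕ → ellTwo →L[ℂ] ellTwo}

lemma comp_of_ne (hP : IsStdBasisProjection P) {a b : ℕ} (h : a ≠ b) : P a ∘L P b = 0 := by
  ext x : 1
  rw [comp_apply, hP b, map_smul, hP a, inner_stdBasis_stdBasis, if_neg h]
  simp

lemma adjoint_eq (hP : IsStdBasisProjection P) (j : ℕ) : adjoint (P j) = P j := by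
  refine ((ContinuousLinearMap.eq_adjoint_iff _ _).2 fun x y => ?_).symm
  rw [hP, hP, inner_smul_left, inner_smul_right, inner_conj_symm]
  ring

end IsStdBasisProjection

section Telescoping

variable (P : ℕ → ellTwo →L[ℂ] ellTwo)

lemma intBall_succ (L : ℕ) :
    intBall (L + 1) = insert (-((L : ℤ) + 1)) (insert ((L : ℤ) + 1) (intBall L)) := by
  ext ℓ
  simp only [intBall, Finset.mem_Icc, Finset.mem_insert]
  omega

lemma Hfam_of_lt_one {ℓ : ℤ} (h : ℓ < 1) : Hfam P ℓ = 0 := if_neg (not_le.2 h)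

lemma Hfam_natCast_succ (L : ℕ) :
    Hfam P ((L : ℤ) + 1) = ((L : ℂ) + 1) ^ 2 • P (L + 1) - (L : ℂ) ^ 2 • P L := by
  rw [Hfam, if_pos (by omega), show ((L : ℤ) + 1).toNat = L + 1 by omega,
    show ((L : ℤ) + 1 - 1).toNat = L by omega]
  push_cast
  ring_nf

lemma sum_Hfam (L : ℕ) : ∑ ℓ ∈ intBall L, Hfam P ℓ = (L : ℂ) ^ 2 • P L := by
  induction L with
  | zero => simp [intBall, Hfam]
  | succ L ih =>
    rw [intBall_succ, Finset.sum_insert (by simp [intBall]; omega),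
      Finset.sum_insert (by simp [intBall]), ih, Hfam_of_lt_one P (by omega), Hfam_natCast_succ]
    push_cast
    abel

end Telescoping

section Kernel

variable {P : ℕ → ellTwo →L[ℂ] ellTwo}

lemma Sfam_comp (a : ℤ) (A : ellTwo →L[ℂ] ellTwo) : Sfam a ∘L A = A := id_comp A

lemma comp_adjoint_Sfam (b : ℤ) (A : ellTwo →L[ℂ] ellTwo) : A ∘L adjoint (Sfam b) = A := by
  rw [Sfam, ← star_eq_adjoint, star_one, one_def, comp_id]

lemma Hfam_comp_eq_zero (hP : IsStdBasisProjection P) {ℓ : ℤ} {j : ℕ} (h : ℓ.toNat < j) :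
    Hfam P ℓ ∘L P j = 0 := by
  unfold Hfam
  split_ifs
  · rw [sub_comp, smul_comp, smul_comp, hP.comp_of_ne (by omega), hP.comp_of_ne (by omega)]
    simp
  · exact zero_comp _

lemma comp_adjoint_Hfam_eq_zero (hP : IsStdBasisProjection P) {ℓ : ℤ} {j : ℕ}
    (h : ℓ.toNat < j) : P j ∘L adjoint (Hfam P ℓ) = 0 := by
  rw [← hP.adjoint_eq, ← adjoint_comp, Hfam_comp_eq_zero hP h, map_zero]

lemma Hfam_comp_sum_adjoint_Hfam_eq_zero (hP : IsStdBasisProjection P) {ℓ : ℤ} {L : ℕ}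
    (h : ℓ.toNat < L) : ∑ ℓ' ∈ intBall L, Hfam P ℓ ∘L adjoint (Hfam P ℓ') = 0 := by
  have hsum : ∑ ℓ' ∈ intBall L, Hfam P ℓ ∘L adjoint (Hfam P ℓ')
      = Hfam P ℓ ∘L adjoint (∑ ℓ' ∈ intBall L, Hfam P ℓ') := by
    simp only [map_sum, ← mul_def, Finset.mul_sum]
  rw [hsum, sum_Hfam, ← star_eq_adjoint, star_smul, star_eq_adjoint, hP.adjoint_eq, comp_smul,
    Hfam_comp_eq_zero hP h, smul_zero]

lemma sum_Hfam_comp_adjoint_Hfam_eq_zero (hP : IsStdBasisProjection P) {ℓ' : ℤ} {L : ℕ}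
    (h : ℓ'.toNat < L) : ∑ ℓ ∈ intBall L, Hfam P ℓ ∘L adjoint (Hfam P ℓ') = 0 := by
  simp only [← mul_def, ← Finset.sum_mul]
  rw [mul_def, sum_Hfam, smul_comp, comp_adjoint_Hfam_eq_zero hP h, smul_zero]

end Kernel

lemma wotTendsto_of_eventually_eq {X Y : Type*} [NormedAddCommGroup X] [InnerProductSpace ℂ X]
    [NormedAddCommGroup Y] [InnerProductSpace ℂ Y] {T : ℕ → X →L[ℂ] Y} {T0 : X →L[ℂ] Y}
    (h : ∀ᶠ L in atTop, T L = T0) : WOTTendsto T T0 := fun x y =>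
  tendsto_const_nhds.congr' (h.mono fun L hL => by simp only [hL])

section NoWOTLimit

lemma memℓp_two_even_inv : Memℓp (fun j : ℕ => if Even j then (j : ℂ)⁻¹ else 0) 2 := by
  refine Memℓp.mono (g := fun j : ℕ => (j : ℝ)⁻¹) (memℓp_gen ?_) fun j => ?_
  · simp [Real.summable_nat_pow_inv.2 one_lt_two]
  · split_ifs <;> simp

/-- Thanks to `(0 : ℂ)⁻¹ = 0` this has entry `1 / j` at every even `j ≥ 2` and `0` elsewhere. -/
def evenInvVec : ellTwo := ⟨_, memℓp_two_even_inv⟩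

lemma evenInvVec_apply (j : ℕ) : evenInvVec j = if Even j then (j : ℂ)⁻¹ else 0 := rfl

variable {P : ℕ → ellTwo →L[ℂ] ellTwo}

lemma inner_sq_smul_apply_evenInvVec (hP : IsStdBasisProjection P) (L : ℕ) :
    (inner ℂ (((L : ℂ) ^ 2 • P L) evenInvVec) evenInvVec : ℂ)
      = if Even L ∧ L ≠ 0 then 1 else 0 := by
  rw [smul_apply, hP, inner_smul_left, inner_smul_left, inner_stdBasis_left, evenInvVec_apply]
  by_cases hL : Even L <;> by_cases hL0 : L = 0 <;> simp [hL, hL0]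
  field_simp

lemma not_wotTendsto_sq_smul (hP : IsStdBasisProjection P) :
    ¬ ∃ T : ellTwo →L[ℂ] ellTwo, WOTTendsto (fun L => ((L : ℂ)) ^ 2 • P L) T := by
  rintro ⟨T, hT⟩
  have hlim := hT evenInvVec evenInvVec
  simp only [inner_sq_smul_apply_evenInvVec hP] at hlim
  have heven : Tendsto (fun k : ℕ => 2 * k + 2) atTop atTop :=
    StrictMono.tendsto_atTop fun a b h => by omega
  have hodd : Tendsto (fun k : ℕ => 2 * k + 1) atTop atTop :=
    StrictMono.tendsto_atTop fun a b h => by omega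
  have hone : (inner ℂ (T evenInvVec) evenInvVec : ℂ) = 1 := by
    refine tendsto_nhds_unique (hlim.comp heven) (tendsto_const_nhds.congr fun k => ?_)
    simp [parity_simps]
  have hzero : (inner ℂ (T evenInvVec) evenInvVec : ℂ) = 0 := by
    refine tendsto_nhds_unique (hlim.comp hodd) (tendsto_const_nhds.congr fun k => ?_)
    simp [parity_simps]
  exact one_ne_zero (hone.symm.trans hzero)

end NoWOTLimit

/-- **Positivity of the multiplier kernel does not imply that the multiplier is well
defined.**  With `P_j` the orthogonal projection onto the span of the `j`-th standard
basis vector of `ℓ²(ℕ)`, `H_ℓ = ℓ² P_ℓ - (ℓ-1)² P_{ℓ-1}` (`ℓ ≥ 1`, else `0`) and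
`S_ℓ = I`: (i) `∑_{|ℓ| ≤ L} S_{n-ℓ} H_ℓ = L² P_L` and `(L² P_L)` has no WOT limit;
(ii) nevertheless the iterated WOT sums of `S_{n-ℓ} H_ℓ H_{ℓ'}* S_{m-ℓ'}*` exist in
either order and equal `0`. -/
theorem pos_kernel_without_welldefined_multiplier
    (P : ℕ → ellTwo →L[ℂ] ellTwo)
    (hP : ∀ (j : ℕ) (x : ellTwo), P j x = (inner ℂ (stdBasis j) x : ℂ) • stdBasis j) :
    (∀ n : ℤ, ∀ L : ℕ, 1 ≤ L →
      ∑ ℓ ∈ intBall L, Sfam (n - ℓ) ∘L Hfam P ℓ = ((L : ℂ)) ^ 2 • P L) ∧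
    (¬ ∃ T : ellTwo →L[ℂ] ellTwo, WOTTendsto (fun L => ((L : ℂ)) ^ 2 • P L) T) ∧
    ∀ n m : ℤ,
      ((∃ G : ℤ → ellTwo →L[ℂ] ellTwo,
        (∀ ℓ, WOTTendsto
          (fun L' => ∑ ℓ' ∈ intBall L',
            Sfam (n - ℓ) ∘L Hfam P ℓ ∘L adjoint (Hfam P ℓ') ∘L adjoint (Sfam (m - ℓ')))
          (G ℓ)) ∧
        WOTTendsto (fun L => ∑ ℓ ∈ intBall L, G ℓ) 0) ∧
      (∃ G' : ℤ → ellTwo →L[ℂ] ellTwo,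
        (∀ ℓ', WOTTendsto
          (fun L => ∑ ℓ ∈ intBall L,
            Sfam (n - ℓ) ∘L Hfam P ℓ ∘L adjoint (Hfam P ℓ') ∘L adjoint (Sfam (m - ℓ')))
          (G' ℓ')) ∧
        WOTTendsto (fun L' => ∑ ℓ' ∈ intBall L', G' ℓ') 0)) := by
  have hzero : WOTTendsto (fun L => ∑ _ℓ ∈ intBall L, (0 : ellTwo →L[ℂ] ellTwo)) 0 :=
    wotTendsto_of_eventually_eq (.of_forall fun _ => Finset.sum_const_zero)
  simp only [Sfam_comp, comp_adjoint_Sfam]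
  refine ⟨fun _ L _ => sum_Hfam P L, not_wotTendsto_sq_smul hP, fun _ _ =>
    ⟨⟨0, fun ℓ => wotTendsto_of_eventually_eq ?_, hzero⟩,
      ⟨0, fun ℓ' => wotTendsto_of_eventually_eq ?_, hzero⟩⟩⟩
  · filter_upwards [eventually_gt_atTop ℓ.toNat] with L hL
    exact Hfam_comp_sum_adjoint_Hfam_eq_zero hP hL
  · filter_upwards [eventually_gt_atTop ℓ'.toNat] with L hL
    exact sum_Hfam_comp_adjoint_Hfam_eq_zero hP hL
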